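/- Let G^c be a vertex-coloured interval graph: the intersection graph of closed real intervals I_1 = [l_1, r_1], …, I_n = [l_n, r_n] (vertices i ≠ j adjacent iff I_i ∩ I_j ≠ ∅), with r_1 ≤ r_2 ≤ … ≤ r_n, together with a surjective colouring c : {1, …, n} → C. For S ⊆ C and i ∈ {1, …, n}, define f(S, i) ∈ ℕ ∪ {∞} as the minimum cardinality of a proper i-prefix dominating set whose set of colours is exactly S (∞ if none exists). Then the tropical domination number of G^c equals the minimum, over all S ⊆ C and all i ∈ {1, …, n} such that {1, …, i} is a dominating set of G, of the quantity f(S, i) + |C \ S|. -/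

import Mathlib

/-- The intersection graph of the closed intervals `[l i, r i]`, `i : Fin n`:
distinct vertices are adjacent iff their intervals meet. -/
def intervalGraph (n : ℕ) (l r : Fin n → ℝ) : SimpleGraph (Fin n) where
  Adj i j := i ≠ j ∧ (Set.Icc (l i) (r i) ∩ Set.Icc (l j) (r j)).Nonempty
  symm := by
    constructor
    intro i j h
    exact ⟨h.1.symm, by rw [Set.inter_comm]; exact h.2⟩
  loopless := by
    constructor
    intro i h
    exact h.1 rfl

/-- `U` dominates the vertex `k` in `G`: `k ∈ U` or `k` is adjacent to a vertex of `U`. -/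
def DominatesVertex {V : Type*} (G : SimpleGraph V) (U : Finset V) (k : V) : Prop :=
  k ∈ U ∨ ∃ u ∈ U, G.Adj u k

/-- `S` is a dominating set of `G`: every vertex is in `S` or has a neighbour in `S`. -/
def IsDomSet {V : Type*} (G : SimpleGraph V) (S : Finset V) : Prop :=
  ∀ v : V, v ∈ S ∨ ∃ u ∈ S, G.Adj u v

/-- `S` is tropical w.r.t. the colouring `col`: every colour appears on a vertex of `S`. -/
def IsTropical {V C : Type*} (col : V → C) (S : Finset V) : Prop :=
  ∀ ch : C, ∃ v ∈ S, col v = ch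

/-- The tropical domination number: the least size of a tropical dominating set. -/
noncomputable def tropDomNum {V C : Type*} (G : SimpleGraph V) (col : V → C) : ℕ :=
  sInf {k : ℕ | ∃ S : Finset V, IsDomSet G S ∧ IsTropical col S ∧ S.card = k}

/-- `U` is an `i`-prefix dominating set: `i ∈ U` and `U` dominates `{1, …, i}`. -/
def PrefixDominating (n : ℕ) (l r : Fin n → ℝ) (U : Finset (Fin n)) (i : Fin n) : Prop :=
  i ∈ U ∧ ∀ j : Fin n, j ≤ i → DominatesVertex (intervalGraph n l r) U j

/-- `U` is proper: for no two distinct `i, j ∈ U` does `Iᵢ ⊆ Iⱼ` hold. -/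
def ProperSet (n : ℕ) (l r : Fin n → ℝ) (U : Finset (Fin n)) : Prop :=
  ∀ i ∈ U, ∀ j ∈ U, i ≠ j → ¬ Set.Icc (l i) (r i) ⊆ Set.Icc (l j) (r j)

/-- `f(S, i)`: the least number of vertices of a proper `i`-prefix dominating set whose
set of colours is exactly `S`, as an extended natural number (`⊤` if none exists). -/
noncomputable def prefixDomFun {C : Type*} [DecidableEq C] (n : ℕ) (l r : Fin n → ℝ)
    (col : Fin n → C) (S : Finset C) (i : Fin n) : ℕ∞ :=
  sInf {x : ℕ∞ | ∃ U : Finset (Fin n), PrefixDominating n l r U i ∧ ProperSet n l r U ∧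
    U.image col = S ∧ (U.card : ℕ∞) = x}

/-!
A minimum tropical dominating set `D` contains a proper dominating set `U` (an interval
contained in another one can be dropped), and the colours missing from `U` cost at least
`|D \ U|`; with `i` the last vertex of `U`, `U` is a proper `i`-prefix dominating set. Conversely,
an `i`-prefix dominating set dominates the whole graph as soon as `{1, …, i}` does, because
any interval beyond `i` that meets an interval of the prefix also meets `Iᵢ`; adding one
vertex per missing colour then gives a tropical dominating set.
-/

open Finset

section Graph

variable {V C : Type*} {G : SimpleGraph V}

lemma DominatesVertex.mono {U U' : Finset V} {k : V} (hk : DominatesVertex G U k)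
    (h : U ⊆ U') : DominatesVertex G U' k :=
  hk.imp (fun hk => h hk) fun ⟨u, hu, hadj⟩ => ⟨u, h hu, hadj⟩

lemma IsDomSet.nonempty [Nonempty V] {D : Finset V} (hD : IsDomSet G D) : D.Nonempty := by
  rcases hD (Classical.arbitrary V) with h | ⟨u, hu, _⟩
  exacts [⟨_, h⟩, ⟨u, hu⟩]

lemma IsDomSet.erase [DecidableEq V] {D : Finset V} (hD : IsDomSet G D) {a b : V}
    (hb : b ∈ D) (hab : a ≠ b) (hnbhd : ∀ v, v = a ∨ G.Adj a v → v = b ∨ G.Adj b v) :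
    IsDomSet G (D.erase a) := by
  have hb' : b ∈ D.erase a := mem_erase.2 ⟨hab.symm, hb⟩
  have hdom_b : ∀ v, v = a ∨ G.Adj a v → DominatesVertex G (D.erase a) v := by
    intro v hv
    rcases hnbhd v hv with rfl | hadj
    exacts [Or.inl hb', Or.inr ⟨b, hb', hadj⟩]
  intro v
  rcases hD v with hv | ⟨u, hu, hadj⟩
  · by_cases hva : v = a
    · exact hdom_b v (Or.inl hva)
    · exact Or.inl (mem_erase.2 ⟨hva, hv⟩)
  · by_cases hua : u = a
    · exact hdom_b v (Or.inr (hua ▸ hadj))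
    · exact Or.inr ⟨u, mem_erase.2 ⟨hua, hu⟩, hadj⟩

lemma tropDomNum_le {col : V → C} {D : Finset V} (hD : IsDomSet G D)
    (htrop : IsTropical col D) : tropDomNum G col ≤ D.card :=
  Nat.sInf_le ⟨D, hD, htrop, rfl⟩

lemma exists_card_eq_tropDomNum [Fintype V] {col : V → C} (hcol : Function.Surjective col) :
    ∃ D : Finset V, IsDomSet G D ∧ IsTropical col D ∧ D.card = tropDomNum G col :=
  Nat.sInf_mem (s := {k | ∃ D : Finset V, IsDomSet G D ∧ IsTropical col D ∧ D.card = k})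
    ⟨_, univ, fun v => Or.inl (mem_univ v),
      fun ch => (hcol ch).imp fun v hv => ⟨mem_univ v, hv⟩, rfl⟩

variable [Fintype C] [DecidableEq C]

lemma tropDomNum_le_card_add_card_sdiff_image [DecidableEq V] {col : V → C}
    (hcol : Function.Surjective col) {D : Finset V} (hD : IsDomSet G D) :
    tropDomNum G col ≤ D.card + (univ \ D.image col).card := by
  set R := (univ \ D.image col).image (Function.surjInv hcol)
  have htrop : IsTropical col (D ∪ R) := by
    intro ch
    by_cases hch : ch ∈ D.image col
    · obtain ⟨v, hv, rfl⟩ := mem_image.1 hch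
      exact ⟨v, mem_union_left _ hv, rfl⟩
    · exact ⟨_, mem_union_right _ (mem_image_of_mem _ (by simpa using hch)),
        Function.surjInv_eq hcol ch⟩
  calc tropDomNum G col ≤ (D ∪ R).card :=
        tropDomNum_le (fun v => DominatesVertex.mono (hD v) subset_union_left) htrop
    _ ≤ D.card + R.card := card_union_le _ _
    _ ≤ D.card + (univ \ D.image col).card := by gcongr; exact card_image_le

/-- Every colour missing from `U ⊆ D` is carried by a vertex of `D \ U`. -/
lemma IsTropical.card_add_card_sdiff_image_le [DecidableEq V] {col : V → C} {D U : Finset V}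
    (htrop : IsTropical col D) (hUD : U ⊆ D) :
    U.card + (univ \ U.image col).card ≤ D.card := by
  have hmissing : univ \ U.image col ⊆ (D \ U).image col := by
    intro ch hch
    obtain ⟨v, hv, rfl⟩ := htrop ch
    have hvU : v ∉ U := fun hvU => (mem_sdiff.1 hch).2 (mem_image_of_mem col hvU)
    exact mem_image_of_mem col (mem_sdiff.2 ⟨hv, hvU⟩)
  calc U.card + (univ \ U.image col).card ≤ U.card + (D \ U).card := by
        gcongr; exact (card_le_card hmissing).trans card_image_le
    _ = D.card := by rw [add_comm, card_sdiff_add_card_eq_card hUD]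

end Graph

section Interval

variable {n : ℕ} {l r : Fin n → ℝ}

lemma intervalGraph_adj {i j : Fin n} :
    (intervalGraph n l r).Adj i j ↔ i ≠ j ∧ max (l i) (l j) ≤ min (r i) (r j) := by
  change i ≠ j ∧ (Set.Icc _ _ ∩ Set.Icc _ _).Nonempty ↔ _
  rw [Set.Icc_inter_Icc, Set.nonempty_Icc]

lemma intervalGraph_adj_of_adj_of_le {u i k : Fin n} (hi : l i ≤ r i) (hui : r u ≤ r i)
    (hik : r i ≤ r k) (hne : i ≠ k) (h : (intervalGraph n l r).Adj u k) :
    (intervalGraph n l r).Adj i k := by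
  rw [intervalGraph_adj] at h ⊢
  obtain ⟨-, hmeet⟩ := h
  rw [max_le_iff, le_min_iff, le_min_iff] at hmeet
  exact ⟨hne, max_le (le_min hi (hi.trans hik)) (le_min (hmeet.2.1.trans hui) hmeet.2.2)⟩

lemma intervalGraph_closedNbhd_subset_of_Icc_subset {a b : Fin n} (ha : l a ≤ r a)
    (hsub : Set.Icc (l a) (r a) ⊆ Set.Icc (l b) (r b)) (v : Fin n) :
    v = a ∨ (intervalGraph n l r).Adj a v → v = b ∨ (intervalGraph n l r).Adj b v := by
  by_cases hvb : v = b
  · exact fun _ => Or.inl hvb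
  rintro (rfl | hadj)
  · exact Or.inr ⟨Ne.symm hvb, l v, hsub ⟨le_rfl, ha⟩, le_rfl, ha⟩
  · obtain ⟨x, hxa, hxv⟩ := hadj.2
    exact Or.inr ⟨Ne.symm hvb, x, hsub hxa, hxv⟩

lemma IsDomSet.exists_properSet_subset (hlr : ∀ i, l i ≤ r i) {D : Finset (Fin n)}
    (hD : IsDomSet (intervalGraph n l r) D) :
    ∃ U ⊆ D, ProperSet n l r U ∧ IsDomSet (intervalGraph n l r) U := by
  induction D using Finset.strongInduction with
  | H D ih =>
    by_cases hP : ProperSet n l r D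
    · exact ⟨D, subset_rfl, hP, hD⟩
    simp only [ProperSet, not_forall, not_not] at hP
    obtain ⟨a, ha, b, hb, hab, hsub⟩ := hP
    obtain ⟨U, hUD, hU⟩ := ih _ (erase_ssubset ha)
      (hD.erase hb hab (intervalGraph_closedNbhd_subset_of_Icc_subset (hlr a) hsub))
    exact ⟨U, hUD.trans (erase_subset a D), hU⟩

lemma PrefixDominating.isDomSet (hlr : ∀ i, l i ≤ r i) (hmono : Monotone r)
    {U : Finset (Fin n)} {i : Fin n} (hU : PrefixDominating n l r U i)
    (hprefix : ∀ k, DominatesVertex (intervalGraph n l r) (Iic i) k) :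
    IsDomSet (intervalGraph n l r) U := by
  intro k
  rcases le_or_gt k i with hki | hik
  · exact hU.2 k hki
  rcases hprefix k with hk | ⟨u, hu, hadj⟩
  · exact absurd (mem_Iic.1 hk) hik.not_ge
  · exact Or.inr ⟨i, hU.1, intervalGraph_adj_of_adj_of_le (hlr i) (hmono (mem_Iic.1 hu))
      (hmono hik.le) hik.ne hadj⟩

lemma IsDomSet.prefixDominating_max' {U : Finset (Fin n)}
    (hU : IsDomSet (intervalGraph n l r) U) (hne : U.Nonempty) :
    PrefixDominating n l r U (U.max' hne) :=
  ⟨U.max'_mem hne, fun j _ => hU j⟩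

variable {C : Type*} [DecidableEq C] {col : Fin n → C}

lemma prefixDomFun_le_card {U : Finset (Fin n)} {i : Fin n} (hU : PrefixDominating n l r U i)
    (hP : ProperSet n l r U) : prefixDomFun n l r col (U.image col) i ≤ U.card :=
  sInf_le ⟨U, hU, hP, rfl, rfl⟩

lemma le_prefixDomFun_add {S : Finset C} {i : Fin n} {a c : ℕ∞}
    (h : ∀ U, PrefixDominating n l r U i → ProperSet n l r U → U.image col = S →
      a ≤ U.card + c) :
    a ≤ prefixDomFun n l r col S i + c := by
  rw [prefixDomFun, ENat.sInf_add]
  refine le_iInf₂ ?_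
  rintro _ ⟨U, hU, hP, hS, rfl⟩
  exact h U hU hP hS

end Interval

/-- for a vertex-coloured interval graph (vertices ordered non-decreasingly
by right endpoints), the tropical domination number equals the minimum over all colour
sets `S ⊆ C` and vertices `i` such that the prefix `{1, …, i}` dominates `G` of
`f(S, i) + |C \ S|`. -/
theorem tropDomNum_eq_prefix_min
    {C : Type*} [Fintype C] [DecidableEq C] [Nonempty C]
    (n : ℕ) (l r : Fin n → ℝ) (hlr : ∀ i, l i ≤ r i) (hmono : Monotone r)
    (col : Fin n → C) (hsurj : Function.Surjective col) :
    (tropDomNum (intervalGraph n l r) col : ℕ∞) =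
      sInf {x : ℕ∞ | ∃ (S : Finset C) (i : Fin n),
        (∀ k : Fin n, DominatesVertex (intervalGraph n l r) (Finset.Iic i) k) ∧
        x = prefixDomFun n l r col S i + ((Finset.univ \ S).card : ℕ∞)} := by
  apply le_antisymm
  · refine le_sInf ?_
    rintro _ ⟨S, i, hprefix, rfl⟩
    refine le_prefixDomFun_add fun U hU _ hS => ?_
    subst hS
    exact_mod_cast tropDomNum_le_card_add_card_sdiff_image hsurj (hU.isDomSet hlr hmono hprefix)
  · obtain ⟨D, hD, htrop, hDcard⟩ := exists_card_eq_tropDomNum (G := intervalGraph n l r) hsurj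
    obtain ⟨U, hUD, hP, hU⟩ := hD.exists_properSet_subset hlr
    have : Nonempty (Fin n) := hsurj.nonempty
    have hne := hU.nonempty
    have hprefix : ∀ k, DominatesVertex (intervalGraph n l r) (Iic (U.max' hne)) k :=
      fun k => DominatesVertex.mono (hU k) fun u hu => mem_Iic.2 (U.le_max' u hu)
    refine sInf_le_of_le ⟨U.image col, U.max' hne, hprefix, rfl⟩ ?_
    calc prefixDomFun n l r col (U.image col) (U.max' hne) + ((univ \ U.image col).card : ℕ∞)
        ≤ U.card + ((univ \ U.image col).card : ℕ∞) := by
          gcongr; exact prefixDomFun_le_card (hU.prefixDominating_max' hne) hP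
      _ ≤ D.card := by exact_mod_cast htrop.card_add_card_sdiff_image_le hUD
      _ = tropDomNum (intervalGraph n l r) col := by rw [hDcard]
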